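/- Converse of Theorem 1.1: Suppose the rule ∑_{ν=1}^n λ_ν g(t_ν), with distinct nodes t_ν ∈ supp(dλ), integrates exactly against dλ all polynomials of degree ≤ 2n−m−1 and all functions (1+ζ_μ t)^{−s}, μ = 1,…,M, s = 1,…,s_μ. Then the rule with nodes t_ν and weights w_ν = λ_ν / ω_m(t_ν) integrates exactly all polynomials of degree ≤ 2n−1 against the measure dλ/ω_m. -/

import Mathlib

/-!
Write `ω_m(t) = ∏ μ, (1 + ζ_μ t) ^ s_μ`. Dividing `f` by `ω_m` and expanding the remainder in
partial fractions gives `f / ω_m = q + ∑ μ, ∑ j ≤ s_μ, c_{μ j} (1 + ζ_μ t) ^ (-j)` with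
`deg q < 2n - m`. The rule integrates every summand on the right exactly, hence also `f / ω_m`,
because the identity holds wherever `ω_m ≠ 0`: `λ`-almost everywhere and at every node, both lying
in the (closed) support of `λ`.
-/

open MeasureTheory Finset Polynomial

/-- The support of a measure on ℝ: points all of whose neighborhoods have
positive measure. -/
def measSupport (μ : Measure ℝ) : Set ℝ := {x | ∀ U ∈ nhds x, μ U ≠ 0}

section PartialFractions

theorem degree_lt_sub_natDegree_of_degree_mul_add_lt {R : Type*} [Semiring R] [Nontrivial R]
    {q g r : R[X]} {N : ℕ} (hg : g.Monic) (hr : r.degree < g.degree)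
    (h : (q * g + r).degree < N) : q.degree < ↑(N - g.natDegree) := by
  rcases eq_or_ne q 0 with rfl | hq
  · simp
  have hqg : (q * g).degree = ↑(q.natDegree + g.natDegree) := by
    rw [hg.degree_mul, degree_eq_natDegree hq, degree_eq_natDegree hg.ne_zero]; rfl
  have hgqg : g.degree ≤ (q * g).degree := by
    rw [hqg, degree_eq_natDegree hg.ne_zero]; exact_mod_cast Nat.le_add_left _ _
  rw [degree_add_eq_left_of_degree_lt (hr.trans_le hgqg), hqg, Nat.cast_lt] at h
  rw [degree_eq_natDegree hq, Nat.cast_lt]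
  omega

variable {ι : Type*} [Fintype ι] [DecidableEq ι]

theorem degree_sum_C_mul_X_sub_C_pow_mul_prod_erase_lt {R : Type*} [CommRing R] [Nontrivial R]
    (a : ι → R) (n : ι → ℕ) (c : (i : ι) → Fin (n i) → R) :
    (∑ i, ∑ j : Fin (n i), C (c i j) * (X - C (a i)) ^ (j : ℕ) *
      ∏ k ∈ univ.erase i, (X - C (a k)) ^ n k).degree < ↑(∑ i, n i) := by
  refine (degree_sum_le _ _).trans_lt ((Finset.sup_lt_iff (WithBot.bot_lt_coe _)).2 fun i _ => ?_)
  refine (degree_sum_le _ _).trans_lt ((Finset.sup_lt_iff (WithBot.bot_lt_coe _)).2 fun j _ => ?_)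
  have hdeg : (C (c i j) * (X - C (a i)) ^ (j : ℕ) *
      ∏ k ∈ univ.erase i, (X - C (a k)) ^ n k).natDegree ≤ j + ∑ k ∈ univ.erase i, n k := by
    refine natDegree_mul_le.trans (add_le_add ((natDegree_C_mul_le _ _).trans ?_) ?_)
    · rw [(monic_X_sub_C _).natDegree_pow, natDegree_X_sub_C, mul_one]
    · refine (natDegree_prod_le _ _).trans (sum_le_sum fun k _ => ?_)
      rw [(monic_X_sub_C _).natDegree_pow, natDegree_X_sub_C, mul_one]
  refine (degree_le_of_natDegree_le hdeg).trans_lt ?_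
  rw [← sum_erase_add _ _ (mem_univ i)]
  exact_mod_cast (by omega : (j : ℕ) + _ < _)

theorem zpow_neg_sub_mul_pow {G : Type*} [GroupWithZero G] {y : G} (hy : y ≠ 0) {j n : ℕ}
    (h : j ≤ n) :
    y ^ (-((n - j : ℕ) : ℤ)) * y ^ n = y ^ j := by
  rw [← zpow_natCast y n, ← zpow_add₀ hy, ← zpow_natCast]
  congr 1
  push_cast [h]
  ring

theorem exists_eval_div_prod_X_sub_C_pow_eq {K : Type*} [Field K] {a : ι → K}
    (ha : Function.Injective a) (n : ι → ℕ) (f : K[X]) {N : ℕ} (hf : f.degree < N) :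
    ∃ (q : K[X]) (c : (i : ι) → Fin (n i) → K), q.degree < ↑(N - ∑ i, n i) ∧
      ∀ x, (∀ i, x ≠ a i) → f.eval x / ∏ i, (x - a i) ^ n i =
        q.eval x + ∑ i, ∑ j : Fin (n i), c i j * (x - a i) ^ (-((n i - j : ℕ) : ℤ)) := by
  obtain ⟨q, r, hr, hfqr⟩ := eq_quo_mul_prod_pow_add_sum_rem_mul_prod_pow (s := univ) f
    (fun i _ => monic_X_sub_C (a i)) (fun i _ j _ hij => pairwise_coprime_X_sub_C ha hij) n
  have hrC : r = fun i j => C ((r i j).coeff 0) := funext₂ fun i j =>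
    eq_C_of_degree_le_zero (Nat.WithBot.lt_one_iff_le_zero.mp
      ((hr i (mem_univ _) j).trans_eq (degree_X_sub_C _)))
  rw [hrC] at hfqr
  have hP : (∏ i, (X - C (a i)) ^ n i).Monic :=
    monic_prod_of_monic _ _ fun i _ => (monic_X_sub_C _).pow _
  have hPdeg : (∏ i, (X - C (a i)) ^ n i).natDegree = ∑ i, n i := by
    rw [natDegree_prod_of_monic _ _ fun i _ => (monic_X_sub_C _).pow _]
    simp [(monic_X_sub_C _).natDegree_pow]
  refine ⟨q, fun i j => (r i j).coeff 0, ?_, fun x hx => ?_⟩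
  · rw [← hPdeg]
    refine degree_lt_sub_natDegree_of_degree_mul_add_lt hP ?_ (hfqr ▸ hf)
    rw [degree_eq_natDegree hP.ne_zero, hPdeg]
    exact degree_sum_C_mul_X_sub_C_pow_mul_prod_erase_lt a n _
  have hx0 : ∀ i, x - a i ≠ 0 := fun i => sub_ne_zero.mpr (hx i)
  rw [div_eq_iff (prod_ne_zero_iff.mpr fun i _ => pow_ne_zero _ (hx0 i)), hfqr]
  simp only [eval_add, eval_mul, eval_finsetSum, eval_prod, eval_pow, eval_sub, eval_X, eval_C,
    add_mul, sum_mul]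
  congr 1
  refine sum_congr rfl fun i _ => sum_congr rfl fun j _ => ?_
  rw [← mul_prod_erase univ _ (mem_univ i), ← zpow_neg_sub_mul_pow (hx0 i) j.isLt.le]
  ring

theorem exists_eval_div_prod_one_add_mul_pow_eq {K : Type*} [Field K] {ζ : ι → K}
    (hζ0 : ∀ i, ζ i ≠ 0) (hζ : Function.Injective ζ) (n : ι → ℕ) (f : K[X]) {N : ℕ}
    (hf : f.degree < N) :
    ∃ (q : K[X]) (c : (i : ι) → Fin (n i) → K), q.degree < ↑(N - ∑ i, n i) ∧
      ∀ x, (∀ i, 1 + ζ i * x ≠ 0) → f.eval x / ∏ i, (1 + ζ i * x) ^ n i =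
        q.eval x + ∑ i, ∑ j : Fin (n i), c i j * (1 + ζ i * x) ^ (-((n i - j : ℕ) : ℤ)) := by
  set κ := ∏ i, ζ i ^ n i
  have hκ : κ ≠ 0 := prod_ne_zero_iff.mpr fun i _ => pow_ne_zero _ (hζ0 i)
  have ha : Function.Injective fun i => -(ζ i)⁻¹ := fun i j h =>
    hζ (inv_injective (neg_injective h))
  obtain ⟨q, c, hq, hqc⟩ := exists_eval_div_prod_X_sub_C_pow_eq ha n (C κ⁻¹ * f)
    ((degree_C_mul (inv_ne_zero hκ)).trans_lt hf)
  refine ⟨q, fun i j => c i j * ζ i ^ (n i - j), hq, fun x hx => ?_⟩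
  have hlin : ∀ i, 1 + ζ i * x = ζ i * (x - -(ζ i)⁻¹) := fun i => by field_simp [hζ0 i]; ring
  have hxa : ∀ i, x ≠ -(ζ i)⁻¹ := fun i h => hx i (by rw [hlin, h, sub_self, mul_zero])
  have hprod : ∏ i, (1 + ζ i * x) ^ n i = κ * ∏ i, (x - -(ζ i)⁻¹) ^ n i := by
    simp_rw [hlin, mul_pow, prod_mul_distrib]; rfl
  have hscale : f.eval x / ∏ i, (1 + ζ i * x) ^ n i =
      (C κ⁻¹ * f).eval x / ∏ i, (x - -(ζ i)⁻¹) ^ n i := by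
    rw [hprod, eval_mul, eval_C]; ring
  rw [hscale, hqc x hxa]
  refine congrArg _ (sum_congr rfl fun i _ => sum_congr rfl fun j _ => ?_)
  rw [hlin, mul_zpow, zpow_neg (ζ i), zpow_natCast]
  field_simp [hζ0 i]

end PartialFractions

theorem measSupport_eq_support (μ : Measure ℝ) : measSupport μ = μ.support := by
  ext x
  simp [measSupport, Measure.mem_support_iff_forall, pos_iff_ne_zero]

theorem ae_mem_closure_measSupport (μ : Measure ℝ) : ∀ᵐ t ∂μ, t ∈ closure (measSupport μ) :=
  Filter.mem_of_superset Measure.support_mem_ae (measSupport_eq_support μ ▸ subset_closure)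

theorem integrable_eval_of_integrable_pow {μ : Measure ℝ}
    (hmom : ∀ k : ℕ, Integrable (fun t : ℝ => t ^ k) μ) (p : ℂ[X]) :
    Integrable (fun t : ℝ => p.eval (t : ℂ)) μ := by
  simp_rw [eval_eq_sum_range]
  exact integrable_finsetSum _ fun k _ => by simpa using (hmom k).ofReal.const_mul (p.coeff k)

theorem exists_pos_le_norm_one_add_mul {K : Set ℝ} (hK : IsClosed K) {z : ℂ} (hz : z ≠ 0)
    (h : ∀ t ∈ K, 1 + z * t ≠ 0) : ∃ ε > 0, ∀ t ∈ K, ε ≤ ‖1 + z * t‖ := by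
  have hKc : IsClosed (((↑) : ℝ → ℂ) '' K) :=
    Complex.isometry_ofReal.isClosedEmbedding.isClosedMap K hK
  have hw : -z⁻¹ ∉ ((↑) : ℝ → ℂ) '' K := by
    rintro ⟨t, ht, hwt⟩
    exact h t ht (by rw [hwt]; field_simp; ring)
  obtain ⟨δ, hδ, hball⟩ := Metric.isOpen_iff.mp hKc.isOpen_compl _ hw
  refine ⟨‖z‖ * δ, mul_pos (norm_pos_iff.mpr hz) hδ, fun t ht => ?_⟩
  have hdist : δ ≤ dist (t : ℂ) (-z⁻¹) :=
    not_lt.mp fun hlt => hball (Metric.mem_ball.mpr hlt) ⟨t, ht, rfl⟩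
  calc ‖z‖ * δ ≤ ‖z‖ * dist (t : ℂ) (-z⁻¹) := by gcongr
    _ = ‖1 + z * t‖ := by rw [dist_eq_norm, ← norm_mul]; congr 1; field_simp; ring

theorem integrable_one_add_mul_zpow_neg {μ : Measure ℝ} [IsFiniteMeasure μ] {K : Set ℝ}
    (hK : IsClosed K) (hμK : ∀ᵐ t ∂μ, t ∈ K) {z : ℂ} (hz : z ≠ 0)
    (h : ∀ t ∈ K, 1 + z * t ≠ 0) (j : ℕ) :
    Integrable (fun t : ℝ => (1 + z * t) ^ (-(j : ℤ))) μ := by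
  obtain ⟨ε, hε, hle⟩ := exists_pos_le_norm_one_add_mul hK hz h
  refine Integrable.mono' (integrable_const (ε ^ j)⁻¹)
    ((Measurable.pow_const (by fun_prop) _).aestronglyMeasurable) ?_
  filter_upwards [hμK] with t ht
  rw [norm_zpow, zpow_neg, zpow_natCast]
  exact inv_anti₀ (pow_pos hε j) (pow_le_pow_left₀ hε.le (hle t ht) j)

section Quadrature

variable {ι : Type*} [Fintype ι]

def exactSubmodule (μ : Measure ℝ) (x : ι → ℝ) (w : ι → ℂ) : Submodule ℂ (ℝ → ℂ) where
  carrier := {g | Integrable g μ ∧ ∫ t, g t ∂μ = ∑ ν, w ν * g (x ν)}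
  zero_mem' := ⟨integrable_zero _ _ _, by simp⟩
  add_mem' := fun ⟨hf, hf'⟩ ⟨hg, hg'⟩ =>
    ⟨hf.add hg, by simp [integral_add hf hg, hf', hg', mul_add, sum_add_distrib]⟩
  smul_mem' := fun c g ⟨hg, hg'⟩ =>
    ⟨hg.smul c, by simp [integral_const_mul, hg', mul_sum, mul_left_comm]⟩

theorem integral_eq_sum_of_eqOn_mem_exactSubmodule {μ : Measure ℝ} {x : ι → ℝ} {w : ι → ℂ}
    {g h : ℝ → ℂ} (hg : g ∈ exactSubmodule μ x w) {K : Set ℝ} (hμK : ∀ᵐ t ∂μ, t ∈ K)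
    (hxK : ∀ ν, x ν ∈ K) (hgh : Set.EqOn h g K) :
    ∫ t, h t ∂μ = ∑ ν, w ν * h (x ν) := by
  rw [integral_congr_ae (hμK.mono hgh), hg.2]
  exact sum_congr rfl fun ν _ => by rw [hgh (hxK ν)]

end Quadrature

theorem stmt_2_general (lam : Measure ℝ)
    (hmom : ∀ k : ℕ, Integrable (fun t : ℝ => t ^ k) lam)
    (M m n : ℕ)
    (ζ : Fin M → ℂ) (hζ0 : ∀ μ, ζ μ ≠ 0) (hζinj : Function.Injective ζ)
    (hζ : ∀ (μ : Fin M), ∀ t ∈ closure (measSupport lam),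
      (1 : ℂ) + ζ μ * (t : ℂ) ≠ 0)
    (s : Fin M → ℕ) (hsum : ∑ μ, s μ = m)
    (tq : Fin n → ℝ) (lamq : Fin n → ℂ)
    (htq : ∀ ν, tq ν ∈ measSupport lam)
    (hpoly : ∀ p : Polynomial ℂ, p.degree < ((2 * n - m : ℕ) : WithBot ℕ) →
      ∫ t : ℝ, p.eval (t : ℂ) ∂lam = ∑ ν, lamq ν * p.eval ((tq ν : ℝ) : ℂ))
    (hrat : ∀ (μ : Fin M) (j : ℕ), 1 ≤ j → j ≤ s μ →
      ∫ t : ℝ, ((1 : ℂ) + ζ μ * (t : ℂ)) ^ (-(j : ℤ)) ∂lam =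
        ∑ ν, lamq ν * ((1 : ℂ) + ζ μ * (tq ν : ℂ)) ^ (-(j : ℤ))) :
    ∀ f : Polynomial ℂ, f.degree < (2 * n : ℕ) →
      ∫ t : ℝ, f.eval (t : ℂ) / ∏ μ, ((1 : ℂ) + ζ μ * (t : ℂ)) ^ s μ ∂lam =
        ∑ ν, (lamq ν / ∏ μ', ((1 : ℂ) + ζ μ' * (tq ν : ℂ)) ^ s μ') *
          f.eval ((tq ν : ℝ) : ℂ) := by
  intro f hf
  have : IsFiniteMeasure lam :=
    (integrable_const_iff.mp (by simpa using hmom 0)).resolve_left one_ne_zero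
  obtain ⟨q, c, hq, hqc⟩ := exists_eval_div_prod_one_add_mul_pow_eq hζ0 hζinj s f hf
  rw [hsum] at hq
  set φ : (μ : Fin M) → Fin (s μ) → ℝ → ℂ := fun μ j t =>
    (1 + ζ μ * t) ^ (-((s μ - j : ℕ) : ℤ))
  have hφ : ∀ μ j, φ μ j ∈ exactSubmodule lam tq lamq := fun μ j =>
    ⟨integrable_one_add_mul_zpow_neg isClosed_closure (ae_mem_closure_measSupport lam) (hζ0 μ)
      (hζ μ) _, hrat μ _ (by omega) (by omega)⟩
  have hmem : (fun t : ℝ => q.eval (t : ℂ)) + ∑ μ, ∑ j, c μ j • φ μ j ∈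
      exactSubmodule lam tq lamq :=
    add_mem ⟨integrable_eval_of_integrable_pow hmom q, hpoly q hq⟩
      (sum_mem fun μ _ => sum_mem fun j _ => Submodule.smul_mem _ _ (hφ μ j))
  rw [integral_eq_sum_of_eqOn_mem_exactSubmodule hmem (ae_mem_closure_measSupport lam)
    (fun ν => subset_closure (htq ν)) fun t ht => by simp [hqc t fun μ => hζ μ t ht, φ]]
  exact sum_congr rfl fun ν _ => by ring

/-- Theorem 1.1, converse: if the rule `∑_ν λ_ν g(t_ν)` with
distinct nodes `t_ν ∈ supp(dλ)` integrates exactly against `dλ` all polynomials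
of degree `≤ 2n−m−1` and all functions `(1+ζ_μ t)^{−s}`, `1 ≤ s ≤ s_μ`, then
the rule with nodes `t_ν` and weights `w_ν = λ_ν/ω_m(t_ν)` integrates exactly
all polynomials of degree `≤ 2n−1` against `dλ/ω_m`. -/
theorem stmt_2 (lam : Measure ℝ)
    (hmom : ∀ k : ℕ, Integrable (fun t : ℝ => t ^ k) lam)
    (M m n : ℕ) (hn : 1 ≤ n) (hm1 : 1 ≤ m) (hm2 : m ≤ 2 * n)
    (ζ : Fin M → ℂ) (hζ0 : ∀ μ, ζ μ ≠ 0) (hζinj : Function.Injective ζ)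
    (hζ : ∀ (μ : Fin M), ∀ t ∈ closure (measSupport lam),
      (1 : ℂ) + ζ μ * (t : ℂ) ≠ 0)
    (s : Fin M → ℕ) (hs : ∀ μ, 1 ≤ s μ) (hsum : ∑ μ, s μ = m)
    (tq : Fin n → ℝ) (lamq : Fin n → ℂ)
    (htq : ∀ ν, tq ν ∈ measSupport lam) (htqinj : Function.Injective tq)
    (hpoly : ∀ p : Polynomial ℂ, p.degree < ((2 * n - m : ℕ) : WithBot ℕ) →
      ∫ t : ℝ, p.eval (t : ℂ) ∂lam = ∑ ν, lamq ν * p.eval ((tq ν : ℝ) : ℂ))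
    (hrat : ∀ (μ : Fin M) (j : ℕ), 1 ≤ j → j ≤ s μ →
      ∫ t : ℝ, ((1 : ℂ) + ζ μ * (t : ℂ)) ^ (-(j : ℤ)) ∂lam =
        ∑ ν, lamq ν * ((1 : ℂ) + ζ μ * (tq ν : ℂ)) ^ (-(j : ℤ))) :
    ∀ f : Polynomial ℂ, f.degree < (2 * n : ℕ) →
      ∫ t : ℝ, f.eval (t : ℂ) / ∏ μ, ((1 : ℂ) + ζ μ * (t : ℂ)) ^ s μ ∂lam =
        ∑ ν, (lamq ν / ∏ μ', ((1 : ℂ) + ζ μ' * (tq ν : ℂ)) ^ s μ') *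
          f.eval ((tq ν : ℝ) : ℂ) :=
  stmt_2_general lam hmom M m n ζ hζ0 hζinj hζ s hsum tq lamq htq hpoly hrat
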